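/- Let R > 0 and let R0 be as in the escape-radius proposition (so that |f^n_ω(z)| ≥ 2^n|z| for |z| > R0 and all ω ∈ D(0,R)^ℕ). Then for all z with |z| > R0 and all ω ∈ D(0,R)^ℕ, the Green function satisfies |g_ω(z) − ln|z|| < 1. -/

import Mathlib

open Metric Complex Filter

/-- The quadratic polynomial `f_c(z) = z^2 + c`. -/
noncomputable def fc (c z : ℂ) : ℂ := z ^ 2 + c

/-- The non-autonomous orbit: `orbitC ω z n = f_{ω(n-1)} ∘ ... ∘ f_{ω 0} (z)`. -/
noncomputable def orbitC (ω : ℕ → ℂ) (z : ℂ) : ℕ → ℂ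
  | 0 => z
  | n + 1 => fc (ω n) (orbitC ω z n)

/-!
Once `|z| ≥ R + 2` and `|c| ≤ R`, the map `f_c` at least doubles `|z|`, so the orbit escapes
like `2^n |z|`. Since `|f_c(w)|` differs from `|w|^2` by at most `R`, the increments of
`2^{-n} ln |f^n_ω(z)|` are bounded by `R / (2^n |f^n_ω(z)|^2) ≤ 8^{-(n+1)}`; hence the sequence
converges, and its limit is within `1/7` of its first term `ln |z|`.
-/

theorem Real.abs_log_sub_log_le {x y : ℝ} (hy : 0 < y) (h : |x - y| ≤ y / 2) :
    |Real.log x - Real.log y| ≤ 2 * |x - y| / y := by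
  have hx : 0 < x := by linarith [(abs_le.1 h).1]
  have upper : Real.log x - Real.log y ≤ (x - y) / y := by
    have := Real.log_le_sub_one_of_pos (div_pos hx hy)
    rwa [Real.log_div hx.ne' hy.ne', div_sub_one hy.ne'] at this
  have lower : (x - y) / x ≤ Real.log x - Real.log y := by
    have := Real.one_sub_inv_le_log_of_pos (div_pos hx hy)
    rwa [Real.log_div hx.ne' hy.ne', inv_div, one_sub_div hx.ne'] at this
  have hxy : |x - y| / x ≤ 2 * |x - y| / y := by
    rw [div_le_div_iff₀ hx hy]
    nlinarith [(abs_le.1 h).1, abs_nonneg (x - y)]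
  have hneg : -(|x - y| / x) ≤ (x - y) / x := by
    rw [← neg_div]
    gcongr
    exact neg_abs_le _
  have hpos : (x - y) / y ≤ 2 * |x - y| / y := by
    gcongr
    linarith [le_abs_self (x - y), abs_nonneg (x - y)]
  exact abs_le.2 ⟨by linarith, by linarith⟩

theorem abs_norm_fc_sub_sq_le (c w : ℂ) : |‖fc c w‖ - ‖w‖ ^ 2| ≤ ‖c‖ := by
  have := abs_norm_sub_norm_le (w ^ 2 + c) (w ^ 2)
  rwa [add_sub_cancel_left, norm_pow] at this

theorem two_mul_norm_le_norm_fc {R : ℝ} {c w : ℂ} (hc : ‖c‖ ≤ R) (hw : R + 2 ≤ ‖w‖) :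
    2 * ‖w‖ ≤ ‖fc c w‖ := by
  have := (abs_le.1 (abs_norm_fc_sub_sq_le c w)).1
  nlinarith [norm_nonneg c]

theorem abs_log_norm_fc_sub_le {c w : ℂ} (h : 2 * ‖c‖ ≤ ‖w‖ ^ 2) (hw : w ≠ 0) :
    |Real.log ‖fc c w‖ - 2 * Real.log ‖w‖| ≤ 2 * ‖c‖ / ‖w‖ ^ 2 := by
  have hsq : 0 < ‖w‖ ^ 2 := by positivity
  have hclose := abs_norm_fc_sub_sq_le c w
  have hlog : Real.log (‖w‖ ^ 2) = 2 * Real.log ‖w‖ := by simp [Real.log_pow]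
  rw [← hlog]
  calc _ ≤ 2 * |‖fc c w‖ - ‖w‖ ^ 2| / ‖w‖ ^ 2 := Real.abs_log_sub_log_le hsq (by linarith)
    _ ≤ 2 * ‖c‖ / ‖w‖ ^ 2 := by gcongr

noncomputable def greenApprox (ω : ℕ → ℂ) (z : ℂ) (n : ℕ) : ℝ :=
  Real.log ‖orbitC ω z n‖ / 2 ^ n

theorem greenApprox_succ_sub (ω : ℕ → ℂ) (z : ℂ) (n : ℕ) :
    greenApprox ω z (n + 1) - greenApprox ω z n
      = (Real.log ‖orbitC ω z (n + 1)‖ - 2 * Real.log ‖orbitC ω z n‖) / 2 ^ (n + 1) := by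
  simp only [greenApprox]
  field_simp
  ring

section Escape

variable {R : ℝ} {ω : ℕ → ℂ} {z : ℂ} (hω : ∀ n, ‖ω n‖ ≤ R) (hz : R + 2 ≤ ‖z‖)
include hω hz

theorem pow_mul_norm_le_norm_orbitC (n : ℕ) : 2 ^ n * ‖z‖ ≤ ‖orbitC ω z n‖ := by
  induction n with
  | zero => simp [orbitC]
  | succ n ih =>
    have hbig : R + 2 ≤ ‖orbitC ω z n‖ :=
      hz.trans (le_mul_of_one_le_left (norm_nonneg z) (one_le_pow₀ one_le_two) |>.trans ih)
    calc 2 ^ (n + 1) * ‖z‖ = 2 * (2 ^ n * ‖z‖) := by ring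
      _ ≤ 2 * ‖orbitC ω z n‖ := by gcongr
      _ ≤ ‖orbitC ω z (n + 1)‖ := two_mul_norm_le_norm_fc (hω n) hbig

theorem abs_log_norm_orbitC_succ_sub_le (n : ℕ) :
    |Real.log ‖orbitC ω z (n + 1)‖ - 2 * Real.log ‖orbitC ω z n‖| ≤ (1 / 4) ^ (n + 1) := by
  have hR : 0 ≤ R := (norm_nonneg _).trans (hω 0)
  have hb : 2 ^ n * (R + 2) ≤ ‖orbitC ω z n‖ :=
    (mul_le_mul_of_nonneg_left hz (by positivity)).trans (pow_mul_norm_le_norm_orbitC hω hz n)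
  have hb_pos : 0 < ‖orbitC ω z n‖ := lt_of_lt_of_le (by positivity) hb
  -- `(R + 2)^2 ≥ 8 R` is `(R - 2)^2 ≥ 0`
  have hb_sq : 4 ^ n * (8 * R) ≤ ‖orbitC ω z n‖ ^ 2 :=
    calc 4 ^ n * (8 * R) ≤ 4 ^ n * (R + 2) ^ 2 := by gcongr; nlinarith [sq_nonneg (R - 2)]
      _ = (2 ^ n * (R + 2)) ^ 2 := by rw [mul_pow, ← pow_mul, mul_comm n 2, pow_mul]; norm_num
      _ ≤ ‖orbitC ω z n‖ ^ 2 := by gcongr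
  have h4n : (1 : ℝ) ≤ 4 ^ n := one_le_pow₀ (by norm_num)
  calc _ ≤ 2 * ‖ω n‖ / ‖orbitC ω z n‖ ^ 2 :=
        abs_log_norm_fc_sub_le (by nlinarith [hω n]) (norm_pos_iff.1 hb_pos)
    _ ≤ 2 * R / ‖orbitC ω z n‖ ^ 2 := by gcongr; exact hω n
    _ ≤ (1 / 4) ^ (n + 1) := by
      rw [div_le_iff₀ (by positivity), one_div_pow, pow_succ]
      field_simp
      linarith

theorem dist_greenApprox_succ_le (n : ℕ) :
    dist (greenApprox ω z n) (greenApprox ω z (n + 1)) ≤ 1 / 8 * (1 / 8) ^ n := by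
  rw [dist_comm, Real.dist_eq, greenApprox_succ_sub, abs_div,
    abs_of_pos (by positivity : (0 : ℝ) < 2 ^ (n + 1))]
  refine (div_le_div_of_nonneg_right (abs_log_norm_orbitC_succ_sub_le hω hz n)
    (by positivity)).trans_eq ?_
  rw [← div_pow, ← pow_succ']
  norm_num

theorem exists_tendsto_greenApprox :
    ∃ g, Tendsto (greenApprox ω z) atTop (nhds g) ∧ |g - Real.log ‖z‖| ≤ 1 / 7 := by
  have hdist := dist_greenApprox_succ_le hω hz
  obtain ⟨g, hg⟩ :=
    cauchySeq_tendsto_of_complete (cauchySeq_of_le_geometric _ _ (by norm_num) hdist)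
  refine ⟨g, hg, ?_⟩
  have := dist_le_of_le_geometric_of_tendsto₀ _ _ (by norm_num) hdist hg
  rw [Real.dist_eq, abs_sub_comm] at this
  simpa [greenApprox, orbitC] using this.trans (by norm_num)

end Escape

/-- For every `R > 0` there is an escape radius `R0 > 0` (so that `|f^n_ω(z)| ≥ 2^n |z|`
whenever `|z| > R0` and all parameters lie in `D(0,R)`) such that moreover for all `z` with
`|z| > R0` and all `ω ∈ D(0,R)^ℕ` the Green function
`g_ω(z) = lim_{n→∞} 2^{-n} ln |f^n_ω(z)|` exists and satisfies `|g_ω(z) - ln |z|| < 1`. -/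
theorem stmt3 (R : ℝ) (hR : 0 < R) :
    ∃ R0 : ℝ, 0 < R0 ∧
      (∀ ω : ℕ → ℂ, (∀ n, ‖ω n‖ < R) →
        ∀ z : ℂ, ‖z‖ > R0 →
          ∀ n : ℕ, ‖orbitC ω z n‖ ≥ 2 ^ n * ‖z‖) ∧
      (∀ ω : ℕ → ℂ, (∀ n, ‖ω n‖ < R) →
        ∀ z : ℂ, ‖z‖ > R0 →
          ∃ g : ℝ, Tendsto (fun n : ℕ => Real.log (‖orbitC ω z n‖) / 2 ^ n)
            atTop (nhds g) ∧ |g - Real.log (‖z‖)| < 1) := by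
  refine ⟨R + 2, by linarith, fun ω hω z hz => ?_, fun ω hω z hz => ?_⟩
  · exact pow_mul_norm_le_norm_orbitC (fun n => (hω n).le) hz.le
  · obtain ⟨g, hg, hbound⟩ := exists_tendsto_greenApprox (fun n => (hω n).le) hz.le
    exact ⟨g, hg, by linarith⟩
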